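/- If an n-particle box Λ_L^{(n)}(a) is fully interactive (i.e., not contained in any region E_J = {x ∈ ℤ^{nd} : min_{i∈J, j∉J} ‖xᵢ − xⱼ‖∞ > r₀} for a nonempty proper subset J of {1,…,n}), then max_{x,x' ∈ S_a} ‖x − x'‖∞ ≤ (n−1)(L + r₀). -/
import Mathlib


/-- The `n`-particle box `Λ_L^{(n)}(a) = ∏ᵢ {z ∈ ℤ^d : ‖z − aᵢ‖∞ ≤ L/2}`. -/
def nBox {n d : ℕ} (a : Fin n → (Fin d → ℝ)) (L : ℝ) : Set (Fin n → (Fin d → ℤ)) :=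
  {z | ∀ i, dist (fun k => (z i k : ℝ)) (a i) ≤ L / 2}

/-- The region `E_J = {x ∈ ℤ^{nd} : min_{i∈J, j∉J} ‖xᵢ − xⱼ‖∞ > r₀}`. -/
def sepRegion {n d : ℕ} (J : Finset (Fin n)) (r₀ : ℝ) : Set (Fin n → (Fin d → ℤ)) :=
  {x | ∀ i ∈ J, ∀ j ∉ J, r₀ < dist (x i) (x j)}

/-- If the `n`-particle box `Λ_L^{(n)}(a)` (`n ≥ 2`, `L ≥ 1`, `r₀ > 0`) is fully
interactive, i.e. not contained in `E_J` for any nonempty proper `J ⊊ {1,…,n}`, then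
`max_{x,x'∈S_a} ‖x − x'‖∞ ≤ (n−1)(L + r₀)`. -/
theorem stmt_5 {n d : ℕ} (hn : 2 ≤ n) (a : Fin n → (Fin d → ℝ)) (L r₀ : ℝ)
    (hL : 1 ≤ L) (hr₀ : 0 < r₀)
    (hFI : ¬ ∃ J : Finset (Fin n), J.Nonempty ∧ J ≠ Finset.univ ∧
      nBox a L ⊆ sepRegion J r₀) :
    ∀ i j, dist (a i) (a j) ≤ (n - 1 : ℝ) * (L + r₀) := by
  have hLr : (0:ℝ) ≤ L + r₀ := by linarith
  -- Step 1: from full interactivity, any nonempty proper J has a short cross-pair of centers.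
  have hA : ∀ J : Finset (Fin n), J.Nonempty → J ≠ Finset.univ →
      ∃ p ∈ J, ∃ q, q ∉ J ∧ dist (a p) (a q) ≤ L + r₀ := by
    intro J hne hprop
    have hsub : ¬ nBox a L ⊆ sepRegion J r₀ := fun h => hFI ⟨J, hne, hprop, h⟩
    rw [Set.not_subset] at hsub
    obtain ⟨x, hx, hxs⟩ := hsub
    simp only [sepRegion, Set.mem_setOf_eq, not_forall, not_lt] at hxs
    obtain ⟨p, hp, q, hq, hd⟩ := hxs
    refine ⟨p, hp, q, hq, ?_⟩
    have h1 : dist (fun k => (x p k : ℝ)) (fun k => (x q k : ℝ)) ≤ r₀ := by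
      rw [dist_pi_le_iff hr₀.le]
      intro k
      have : dist ((x p k : ℝ)) ((x q k : ℝ)) = dist (x p k) (x q k) :=
        Int.dist_cast_real _ _
      rw [this]
      exact le_trans (dist_le_pi_dist (x p) (x q) k) hd
    have h2 : dist (fun k => (x p k : ℝ)) (a p) ≤ L / 2 := hx p
    have h3 : dist (fun k => (x q k : ℝ)) (a q) ≤ L / 2 := hx q
    calc dist (a p) (a q)
        ≤ dist (a p) (fun k => (x p k : ℝ)) + dist (fun k => (x p k : ℝ)) (fun k => (x q k : ℝ))
          + dist (fun k => (x q k : ℝ)) (a q) := dist_triangle4 _ _ _ _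
      _ ≤ L / 2 + r₀ + L / 2 := by
          have h2' : dist (a p) (fun k => (x p k : ℝ)) ≤ L / 2 := by
            rw [dist_comm]; exact h2
          linarith
      _ = L + r₀ := by ring
  -- Step 2: grow a reachable set.
  have key : ∀ i : Fin n, ∀ k : ℕ, ∃ J : Finset (Fin n), i ∈ J ∧
      (∀ p ∈ J, dist (a i) (a p) ≤ ((J.card : ℝ) - 1) * (L + r₀)) ∧
      (J = Finset.univ ∨ k + 1 ≤ J.card) := by
    intro i k
    induction k with
    | zero =>
      refine ⟨{i}, Finset.mem_singleton_self i, ?_, Or.inr (by simp)⟩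
      intro p hp
      rw [Finset.mem_singleton] at hp
      subst hp
      simp
    | succ k ih =>
      obtain ⟨J, hiJ, hbd, hcase⟩ := ih
      rcases hcase with h | h
      · exact ⟨J, hiJ, hbd, Or.inl h⟩
      by_cases hu : J = Finset.univ
      · exact ⟨J, hiJ, hbd, Or.inl hu⟩
      obtain ⟨p, hp, q, hq, hpq⟩ := hA J ⟨i, hiJ⟩ hu
      refine ⟨insert q J, Finset.mem_insert_of_mem hiJ, ?_, Or.inr ?_⟩
      · intro p' hp'
        rw [Finset.card_insert_of_notMem hq]
        rcases Finset.mem_insert.mp hp' with rfl | hp'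
        · calc dist (a i) (a p') ≤ dist (a i) (a p) + dist (a p) (a p') :=
                dist_triangle _ _ _
            _ ≤ ((J.card : ℝ) - 1) * (L + r₀) + (L + r₀) := add_le_add (hbd p hp) hpq
            _ = (((J.card + 1 : ℕ) : ℝ) - 1) * (L + r₀) := by push_cast; ring
        · refine le_trans (hbd p' hp') ?_
          have : ((J.card : ℝ) - 1) ≤ ((J.card + 1 : ℕ) : ℝ) - 1 := by push_cast; linarith
          exact mul_le_mul_of_nonneg_right this hLr
      · rw [Finset.card_insert_of_notMem hq]; omega
  intro i j
  obtain ⟨J, hiJ, hbd, hcase⟩ := key i n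
  have hJu : J = Finset.univ := by
    rcases hcase with h | h
    · exact h
    · exfalso
      have hle : J.card ≤ n := by
        simpa using Finset.card_le_univ J
      omega
  have hj : j ∈ J := hJu ▸ Finset.mem_univ j
  have := hbd j hj
  rw [hJu] at this
  simpa using this
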